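/- Fix L ≥ 1, K_u ≥ 1, cell index j ∈ Fin L, user index n ∈ Fin K_u, constants E_u > 0, E_d > 0, σ² > 0, κ ≥ 0, a scaling exponent C with 0 ≤ C < 1, coefficients β_u : Fin L → Fin K_u → ℝ with β_u j n > 0 and β_u l m ≥ 0, β_b : Fin L → ℝ with β_b l ≥ 0, and β_bjj ≥ 0. For M : ℕ define P_u(M) = E_u/M^C, P_d(M) = E_d/M^C and R(M) = log₂( 1 + P_u(M)·(M−1)·β_u j n / ( P_u(M)·Σ_{(l,m)≠(j,n)} β_u l m + P_d(M)·Σ_{l≠j} β_b l + σ² + κ·P_d(M)·β_bjj ) ). Then R(M) → ∞ as M → ∞, i.e., Filter.Tendsto R Filter.atTop Filter.atTop. -/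

import Mathlib

/-! The signal power grows like `M^{1-C}` while the interference-plus-noise power stays between
`σ²` and its value at `M = 1`, so the SINR, and with it the rate, diverges. -/

open Filter Real

theorem Filter.Tendsto.atTop_div_of_le {α 𝕜 : Type*} [Semifield 𝕜] [LinearOrder 𝕜]
    [IsStrictOrderedRing 𝕜] {l : Filter α} {f g : α → 𝕜} {B : 𝕜} (hB : 0 < B)
    (hf : Tendsto f l atTop) (hg : ∀ᶠ x in l, 0 < g x ∧ g x ≤ B) :
    Tendsto (fun x => f x / g x) l atTop := by
  refine tendsto_atTop_mono' l ?_ (hf.atTop_div_const hB)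
  filter_upwards [hg, hf.eventually_ge_atTop 0] with x ⟨hg0, hgB⟩ hf0
  exact div_le_div_of_nonneg_left hf0 hg0 hgB

theorem tendsto_sub_one_div_rpow_atTop {C : ℝ} (hC : C < 1) :
    Tendsto (fun x : ℝ => (x - 1) / x ^ C) atTop atTop := by
  have hpow : Tendsto (fun x : ℝ => x ^ (1 - C)) atTop atTop := tendsto_rpow_atTop (by linarith)
  have hfactor : Tendsto (fun x : ℝ => 1 - x⁻¹) atTop (nhds 1) := by
    simpa using tendsto_inv_atTop_zero.const_sub (1 : ℝ)
  refine (hpow.atTop_mul_pos one_pos hfactor).congr' ?_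
  filter_upwards [eventually_gt_atTop 0] with x hx
  rw [rpow_sub hx, rpow_one]
  field_simp

theorem uplink_rate_tendsto_atTop_of_slow_power_scaling_general
    (L Ku : ℕ) (j : Fin L) (n : Fin Ku)
    (Eu Ed σsq : ℝ) (hEu : 0 < Eu) (hEd : 0 < Ed) (hσ : 0 < σsq)
    (κ : ℝ) (hκ : 0 ≤ κ) (C : ℝ) (hC0 : 0 ≤ C) (hC1 : C < 1)
    (βu : Fin L → Fin Ku → ℝ) (hβujn : 0 < βu j n) (hβu : ∀ l m, 0 ≤ βu l m)
    (βb : Fin L → ℝ) (hβb : ∀ l, 0 ≤ βb l) (βbjj : ℝ) (hβbjj : 0 ≤ βbjj) :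
    Filter.Tendsto (fun M : ℕ =>
        let Pu : ℝ := Eu / (M : ℝ) ^ C
        let Pd : ℝ := Ed / (M : ℝ) ^ C
        Real.logb 2 (1 + Pu * ((M : ℝ) - 1) * βu j n /
          (Pu * ∑ p ∈ Finset.univ.erase (j, n), βu p.1 p.2
            + Pd * ∑ l ∈ Finset.univ.erase j, βb l
            + σsq + κ * Pd * βbjj)))
      Filter.atTop Filter.atTop := by
  set S₁ := ∑ p ∈ Finset.univ.erase (j, n), βu p.1 p.2
  set S₂ := ∑ l ∈ Finset.univ.erase j, βb l
  have hS₁ : 0 ≤ S₁ := Finset.sum_nonneg fun p _ => hβu p.1 p.2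
  have hS₂ : 0 ≤ S₂ := Finset.sum_nonneg fun l _ => hβb l
  have hsignal : Tendsto (fun M : ℕ => Eu / (M : ℝ) ^ C * ((M : ℝ) - 1) * βu j n) atTop atTop := by
    have := ((tendsto_sub_one_div_rpow_atTop hC1).comp tendsto_natCast_atTop_atTop).const_mul_atTop
      (mul_pos hEu hβujn)
    refine this.congr fun M => ?_
    simp only [Function.comp_apply]
    ring
  have hinterference : ∀ᶠ M : ℕ in atTop,
      0 < Eu / (M : ℝ) ^ C * S₁ + Ed / (M : ℝ) ^ C * S₂ + σsq + κ * (Ed / (M : ℝ) ^ C) * βbjj ∧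
      Eu / (M : ℝ) ^ C * S₁ + Ed / (M : ℝ) ^ C * S₂ + σsq + κ * (Ed / (M : ℝ) ^ C) * βbjj ≤
        Eu * S₁ + Ed * S₂ + σsq + κ * Ed * βbjj := by
    filter_upwards [eventually_ge_atTop 1] with M hM
    have hMC : 1 ≤ (M : ℝ) ^ C := one_le_rpow (by exact_mod_cast hM) hC0
    constructor
    · positivity
    · gcongr
      · exact div_le_self hEu.le hMC
      · exact div_le_self hEd.le hMC
      · exact div_le_self hEd.le hMC
  have hB : 0 < Eu * S₁ + Ed * S₂ + σsq + κ * Ed * βbjj := by positivity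
  exact (tendsto_logb_atTop one_lt_two).comp
    (tendsto_atTop_add_const_left _ 1 (hsignal.atTop_div_of_le hB hinterference))

/-- Remark 1, second half: with perfect CSI and transmit powers scaled as `1/M^C` with
`0 ≤ C < 1`, the closed-form uplink achievable rate of user `n` in cell `j` grows without bound
as `M → ∞`. -/
theorem uplink_rate_tendsto_atTop_of_slow_power_scaling
    (L Ku : ℕ) (hL : 1 ≤ L) (hKu : 1 ≤ Ku) (j : Fin L) (n : Fin Ku)
    (Eu Ed σsq : ℝ) (hEu : 0 < Eu) (hEd : 0 < Ed) (hσ : 0 < σsq)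
    (κ : ℝ) (hκ : 0 ≤ κ) (C : ℝ) (hC0 : 0 ≤ C) (hC1 : C < 1)
    (βu : Fin L → Fin Ku → ℝ) (hβujn : 0 < βu j n) (hβu : ∀ l m, 0 ≤ βu l m)
    (βb : Fin L → ℝ) (hβb : ∀ l, 0 ≤ βb l) (βbjj : ℝ) (hβbjj : 0 ≤ βbjj) :
    Filter.Tendsto (fun M : ℕ =>
        let Pu : ℝ := Eu / (M : ℝ) ^ C
        let Pd : ℝ := Ed / (M : ℝ) ^ C
        Real.logb 2 (1 + Pu * ((M : ℝ) - 1) * βu j n /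
          (Pu * ∑ p ∈ Finset.univ.erase (j, n), βu p.1 p.2
            + Pd * ∑ l ∈ Finset.univ.erase j, βb l
            + σsq + κ * Pd * βbjj)))
      Filter.atTop Filter.atTop :=
  uplink_rate_tendsto_atTop_of_slow_power_scaling_general L Ku j n Eu Ed σsq hEu hEd hσ κ hκ C hC0
    hC1 βu hβujn hβu βb hβb βbjj hβbjj
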